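/- For the nrDFAwtl A_ex3 defined in the context, L(A_ex3) ∩ (abc)* = {(abc)^(3ⁿ) : n ≥ 0}, i.e., exactly those powers (abc)^m with m a power of 3 are accepted among the words in (abc)*. -/

import Mathlib

/-- The end-of-tape behaviour of a non-returning automaton with translucent
letters: either a set of states to continue with (the empty set meaning that
the transition is undefined), or the operation `Accept`. -/
inductive EndMove (Q : Type) where
  | cont : Set Q → EndMove Q
  | accept : EndMove Q

/-- A nondeterministic finite automaton with translucent letters (NFAwtl).
`τ q` is the set of letters that are translucent for state `q`. -/
structure NFAwtl (Q : Type) (A : Type) where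
  τ : Q → Set A
  I : Set Q
  F : Set Q
  δ : Q → A → Set Q
  tr_compat : ∀ q a, a ∈ τ q → δ q a = ∅

namespace NFAwtl

variable {Q A : Type}

/-- A single computation step of an NFAwtl: the first letter (from the left)
that is not translucent for the current state is read and deleted. -/
inductive Step (M : NFAwtl Q A) : Q × List A → Q × List A → Prop
  | read (q q' : Q) (u v : List A) (a : A) :
      (∀ b ∈ u, b ∈ M.τ q) → a ∉ M.τ q → q' ∈ M.δ q a →
      Step M (q, u ++ a :: v) (q', u ++ v)

/-- The language accepted by an NFAwtl: words from which some computation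
reaches a configuration whose remaining tape contents is translucent for a
final state. -/
def lang (M : NFAwtl Q A) : Set (List A) :=
  { w | ∃ q₀ ∈ M.I, ∃ q w', Relation.ReflTransGen (Step M) (q₀, w) (q, w') ∧
        (∀ b ∈ w', b ∈ M.τ q) ∧ q ∈ M.F }

/-- An NFAwtl is deterministic (a DFAwtl) if it has a single initial state and
at most one transition for each state/letter pair. -/
def IsDet (M : NFAwtl Q A) : Prop :=
  (∃ q, M.I = {q}) ∧ ∀ q a, (M.δ q a).Subsingleton

end NFAwtl

/-- A configuration of a non-returning automaton with translucent letters: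
`conf x q w` means the tape contains `x ++ w` followed by the end-of-tape
marker, the current state is `q`, and the head is positioned at the first
letter of `w`; `accept` is the accepting halting configuration. -/
inductive NrConf (Q : Type) (A : Type) where
  | conf : List A → Q → List A → NrConf Q A
  | accept : NrConf Q A

/-- A non-returning nondeterministic finite automaton with translucent
letters (nrNFAwtl). -/
structure NrNFAwtl (Q : Type) (A : Type) where
  τ : Q → Set A
  I : Set Q
  δ : Q → A → Set Q
  δend : Q → EndMove Q
  tr_compat : ∀ q a, a ∈ τ q → δ q a = ∅

namespace NrNFAwtl

variable {Q A : Type}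

/-- A single computation step of an nrNFAwtl. -/
inductive Step (M : NrNFAwtl Q A) : NrConf Q A → NrConf Q A → Prop
  | read (x : List A) (q q' : Q) (u v : List A) (a : A) :
      (∀ b ∈ u, b ∈ M.τ q) → a ∉ M.τ q → q' ∈ M.δ q a →
      Step M (.conf x q (u ++ a :: v)) (.conf (x ++ u) q' v)
  | restart (x w : List A) (q q' : Q) (S : Set Q) :
      (∀ b ∈ w, b ∈ M.τ q) → M.δend q = .cont S → q' ∈ S →
      Step M (.conf x q w) (.conf [] q' (x ++ w))
  | accept (x w : List A) (q : Q) :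
      (∀ b ∈ w, b ∈ M.τ q) → M.δend q = .accept →
      Step M (.conf x q w) .accept

/-- The language accepted by an nrNFAwtl. -/
def lang (M : NrNFAwtl Q A) : Set (List A) :=
  { w | ∃ q₀ ∈ M.I, Relation.ReflTransGen (Step M) (.conf [] q₀ w) .accept }

/-- An nrNFAwtl is deterministic (an nrDFAwtl) if it has a single initial
state and, for every state and every letter (including the end-of-tape
marker), at most one transition is available. -/
def IsDet (M : NrNFAwtl Q A) : Prop :=
  (∃ q, M.I = {q}) ∧ (∀ q a, (M.δ q a).Subsingleton) ∧
  (∀ q S, M.δend q = .cont S → S.Subsingleton)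

end NrNFAwtl

/-- `L` is accepted by some NFAwtl. -/
def AcceptedByNFAwtl {A : Type} [Fintype A] (L : Set (List A)) : Prop :=
  ∃ (Q : Type) (_ : Fintype Q) (M : NFAwtl Q A), M.lang = L

/-- `L` is accepted by some DFAwtl. -/
def AcceptedByDFAwtl {A : Type} [Fintype A] (L : Set (List A)) : Prop :=
  ∃ (Q : Type) (_ : Fintype Q) (M : NFAwtl Q A), M.IsDet ∧ M.lang = L

/-- `L` is accepted by some nrNFAwtl. -/
def AcceptedByNrNFAwtl {A : Type} [Fintype A] (L : Set (List A)) : Prop :=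
  ∃ (Q : Type) (_ : Fintype Q) (M : NrNFAwtl Q A), M.lang = L

/-- `L` is accepted by some nrDFAwtl. -/
def AcceptedByNrDFAwtl {A : Type} [Fintype A] (L : Set (List A)) : Prop :=
  ∃ (Q : Type) (_ : Fintype Q) (M : NrNFAwtl Q A), M.IsDet ∧ M.lang = L

/-- The three-letter alphabet `{a, b, c}`. -/
inductive Γ3 : Type
  | a | b | c
deriving DecidableEq

instance : Fintype Γ3 :=
  ⟨{Γ3.a, Γ3.b, Γ3.c}, by intro x; cases x <;> simp⟩

/-- The state set of the nrDFAwtl `A_ex3`. -/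
inductive StEx3 : Type
  | q0 | q1 | q2 | q3 | q4 | q5 | q6 | q7 | q8
deriving DecidableEq

instance : Fintype StEx3 :=
  ⟨{StEx3.q0, StEx3.q1, StEx3.q2, StEx3.q3, StEx3.q4, StEx3.q5, StEx3.q6, StEx3.q7, StEx3.q8},
    by intro x; cases x <;> simp⟩

/-- The translucency mapping of `A_ex3`. -/
def τEx3 : StEx3 → Set Γ3
  | .q0 => {Γ3.a}
  | .q1 => ∅
  | .q2 => ∅
  | .q3 => {Γ3.b}
  | .q4 => ∅
  | .q5 => ∅
  | .q6 => {Γ3.a, Γ3.c}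
  | .q7 => ∅
  | .q8 => ∅

/-- The letter transitions of `A_ex3`. -/
def δEx3 : StEx3 → Γ3 → Set StEx3
  | .q0, .b => {StEx3.q1}
  | .q1, .c => {StEx3.q2}
  | .q2, .a => {StEx3.q3}
  | .q3, .c => {StEx3.q4}
  | .q4, .a => {StEx3.q5}
  | .q5, .b => {StEx3.q6}
  | .q6, .b => {StEx3.q1}
  | .q7, .a => {StEx3.q8}
  | _, _ => ∅

/-- The end-of-tape transitions of `A_ex3`. -/
def δendEx3 : StEx3 → EndMove StEx3
  | .q2 => .cont {StEx3.q7}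
  | .q6 => .cont {StEx3.q0}
  | .q8 => .accept
  | _ => .cont ∅

/-- The nrDFAwtl `A_ex3` from Example 7 of the paper. -/
def Aex3 : NrNFAwtl StEx3 Γ3 where
  τ := τEx3
  I := {StEx3.q0}
  δ := δEx3
  δend := δendEx3
  tr_compat := by
    intro q x h
    cases q <;> cases x <;> simp_all [τEx3, δEx3]

/-!
On a word `(abc)^m` with `m ≥ 1`, one sweep of `A_ex3` reads the `b` and `c` of the first block
and then, cycling through `q₂, …, q₆, q₁`, deletes six letters from every further group of three
blocks, leaving one block behind. The sweep ends in `q₆` and restarts in `q₀` on `(abc)^(m/3)`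
exactly when `m ≡ 0 (mod 3)`; it accepts when `m = 1` and gets stuck in `q₄` or `q₈` otherwise.
Since the automaton is deterministic, `(abc)^(3k)` is accepted iff `(abc)^k` is, and induction
on `m` leaves exactly the powers of three.
-/

open Relation

lemma List.append_cons_inj_of_forall_mem {α : Type*} {p : α → Prop} {u u' v v' : List α}
    {a a' : α} (hu : ∀ x ∈ u, p x) (hu' : ∀ x ∈ u', p x) (ha : ¬ p a) (ha' : ¬ p a')
    (h : u ++ a :: v = u' ++ a' :: v') : u = u' ∧ a = a' ∧ v = v' := by
  simp only [List.append_eq_append_iff, List.cons_eq_append_iff, List.cons_eq_cons] at h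
  rcases h with ⟨c, rfl, ⟨rfl, rfl, rfl⟩ | ⟨d, rfl, rfl⟩⟩ |
      ⟨c, rfl, ⟨rfl, rfl, rfl⟩ | ⟨d, rfl, rfl⟩⟩ <;>
    simp_all

lemma Nat.exists_mul_eq_pow_iff {b j : ℕ} (hb : 0 < b) :
    (∃ n, b * j = b ^ n) ↔ ∃ n, j = b ^ n := by
  constructor
  · rintro ⟨_ | n, h⟩
    · exact ⟨0, by simpa using Nat.eq_one_of_mul_eq_one_left h⟩
    · exact ⟨n, Nat.eq_of_mul_eq_mul_left hb (h.trans Nat.pow_succ')⟩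
  · rintro ⟨n, rfl⟩
    exact ⟨n + 1, Nat.pow_succ'.symm⟩

lemma Nat.not_exists_eq_pow_of_not_dvd {b m : ℕ} (hm₁ : m ≠ 1) (hb : ¬ b ∣ m) :
    ¬ ∃ n, m = b ^ n := by
  rintro ⟨_ | n, rfl⟩
  exacts [hm₁ rfl, hb (dvd_pow_self b n.succ_ne_zero)]

namespace NrNFAwtl

variable {Q A : Type} {M : NrNFAwtl Q A}

lemma Step.read_head {x v : List A} {q q' : Q} {a : A} (ha : a ∉ M.τ q) (hq : q' ∈ M.δ q a) :
    M.Step (.conf x q (a :: v)) (.conf x q' v) := by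
  simpa using Step.read x q q' [] v a (by simp) ha hq

lemma Step.restart_end {x : List A} {q q' : Q} {S : Set Q} (he : M.δend q = .cont S)
    (hq : q' ∈ S) : M.Step (.conf x q []) (.conf [] q' x) := by
  simpa using Step.restart x [] q q' S (by simp) he hq

lemma Step.rightUnique (hM : M.IsDet) : Relator.RightUnique M.Step := by
  obtain ⟨-, hδ, hend⟩ := hM
  rintro c d₁ d₂ h₁ h₂
  cases h₁ with
  | read _ q q₁ u v a hu ha hq₁ =>
    generalize htape : u ++ a :: v = w at h₂
    cases h₂ with
    | read _ _ q₂ u' v' a' hu' ha' hq₂ =>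
      obtain ⟨rfl, rfl, rfl⟩ := List.append_cons_inj_of_forall_mem hu hu' ha ha' htape
      rw [hδ q a hq₁ hq₂]
    | restart _ _ _ _ _ hw => exact absurd (hw a (by simp [← htape])) ha
    | accept _ _ _ hw => exact absurd (hw a (by simp [← htape])) ha
  | restart _ _ q q₁ S hw he hq₁ =>
    cases h₂ with
    | read _ _ _ _ _ a _ ha => exact absurd (hw a (by simp)) ha
    | restart _ _ _ q₂ S' _ he' hq₂ =>
      cases he.symm.trans he'
      rw [hend q S he hq₁ hq₂]
    | accept _ _ _ _ he' => cases he.symm.trans he'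
  | accept _ _ _ hw he =>
    cases h₂ with
    | read _ _ _ _ _ a _ ha => exact absurd (hw a (by simp)) ha
    | restart _ _ _ _ _ _ he' => cases he.symm.trans he'
    | accept => rfl

lemma not_step_cons_of_δ_eq_empty {x w : List A} {q : Q} {a : A} (ha : a ∉ M.τ q)
    (hδ : M.δ q a = ∅) (d : NrConf Q A) : ¬ M.Step (.conf x q (a :: w)) d := by
  intro h
  generalize htape : a :: w = t at h
  cases h with
  | read _ _ _ u _ _ hu _ hq =>
    cases u with
    | nil => cases htape; simp [hδ] at hq
    | cons y u => cases htape; exact ha (hu a (by simp))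
  | restart _ _ _ _ _ hw => exact ha (hw a (by simp [← htape]))
  | accept _ _ _ hw => exact ha (hw a (by simp [← htape]))

lemma not_step_nil_of_δend_eq_empty {x : List A} {q : Q} (he : M.δend q = .cont ∅)
    (d : NrConf Q A) : ¬ M.Step (.conf x q []) d := by
  intro h
  generalize htape : ([] : List A) = t at h
  cases h with
  | read => simp at htape
  | restart _ _ _ _ _ _ he' hq => cases he.symm.trans he'; exact hq
  | accept _ _ _ _ he' => cases he.symm.trans he'

variable (M) in
def AcceptsFrom (c : NrConf Q A) : Prop :=
  ReflTransGen M.Step c .accept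

lemma acceptsFrom_iff_of_reflTransGen (hM : Relator.RightUnique M.Step) {c d : NrConf Q A}
    (h : ReflTransGen M.Step c d) : M.AcceptsFrom c ↔ M.AcceptsFrom d := by
  refine ⟨fun hc => ?_, h.trans⟩
  rcases h.total_of_right_unique hM hc with hd | hd
  · exact hd
  · rcases hd.cases_head with rfl | ⟨_, hstep, _⟩
    · exact .refl
    · cases hstep

lemma not_acceptsFrom_of_not_step {x w : List A} {q : Q}
    (h : ∀ d, ¬ M.Step (.conf x q w) d) : ¬ M.AcceptsFrom (.conf x q w) := by
  intro hacc
  rcases hacc.cases_head with hc | ⟨d, hd, -⟩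
  exacts [(nomatch hc), h d hd]

end NrNFAwtl

namespace Aex3

open NrNFAwtl Γ3 StEx3

abbrev abcPow (m : ℕ) : List Γ3 := (List.replicate m [a, b, c]).flatten

lemma abcPow_add (m n : ℕ) : abcPow (m + n) = abcPow m ++ abcPow n := by
  rw [abcPow, List.replicate_add, List.flatten_append]

lemma abcPow_append_a_append_b_append_c_a (j : ℕ) :
    abcPow j ++ [a] ++ [b] ++ [c, a] = abcPow (j + 1) ++ [a] := by
  simp [abcPow_add, abcPow]

lemma isDet : Aex3.IsDet := by
  refine ⟨⟨q0, rfl⟩, fun q σ => ?_, fun q S he => ?_⟩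
  · cases q <;> cases σ <;> simp [Aex3, δEx3]
  · cases q <;> cases he <;> simp

lemma step_rightUnique : Relator.RightUnique Aex3.Step :=
  Step.rightUnique isDet

lemma mem_lang_iff {w : List Γ3} : w ∈ Aex3.lang ↔ Aex3.AcceptsFrom (.conf [] q0 w) := by
  simp [NrNFAwtl.lang, AcceptsFrom, Aex3]

lemma step_start (w : List Γ3) :
    Aex3.Step (.conf [] q0 (a :: b :: c :: w)) (.conf [a] q1 (c :: w)) :=
  .read [] q0 q1 [a] (c :: w) b (by simp [Aex3, τEx3]) (by simp [Aex3, τEx3])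
    (by simp [Aex3, δEx3])

lemma run_cycle (x w : List Γ3) :
    ReflTransGen Aex3.Step (.conf x q1 (c :: (abcPow 3 ++ w)))
      (.conf (x ++ [b] ++ [c, a]) q1 (c :: w)) := by
  refine .head (.read_head (q' := q2) ?_ ?_) <| .head (.read_head (q' := q3) ?_ ?_) <|
    .head (.read _ _ q4 [b] _ _ ?_ ?_ ?_) <| .head (.read_head (q' := q5) ?_ ?_) <|
    .head (.read_head (q' := q6) ?_ ?_) <| .single (.read _ _ q1 [c, a] _ _ ?_ ?_ ?_)
  all_goals simp [Aex3, τEx3, δEx3]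

lemma run_cycles (t : ℕ) : ∀ (j : ℕ) (w : List Γ3),
    ReflTransGen Aex3.Step (.conf (abcPow j ++ [a]) q1 (c :: (abcPow (3 * t) ++ w)))
      (.conf (abcPow (t + j) ++ [a]) q1 (c :: w)) := by
  induction t with
  | zero =>
    intro j w
    rw [Nat.zero_add]
    exact .refl
  | succ t ih =>
    intro j w
    rw [Nat.mul_succ, Nat.add_comm, abcPow_add, List.append_assoc, Nat.succ_add_eq_add_succ]
    exact (run_cycle _ _).trans (abcPow_append_a_append_b_append_c_a j ▸ ih (j + 1) w)

lemma run_sweep (k : ℕ) (w : List Γ3) :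
    ReflTransGen Aex3.Step (.conf [] q0 (abcPow (1 + 3 * k) ++ w))
      (.conf (abcPow k ++ [a]) q1 (c :: w)) := by
  rw [abcPow_add, List.append_assoc]
  exact .head (step_start _) (run_cycles k 0 w)

lemma run_restart (x : List Γ3) :
    ReflTransGen Aex3.Step (.conf x q1 (c :: abcPow 2)) (.conf [] q0 (x ++ [b] ++ [c])) := by
  refine .head (.read_head (q' := q2) ?_ ?_) <| .head (.read_head (q' := q3) ?_ ?_) <|
    .head (.read _ _ q4 [b] _ _ ?_ ?_ ?_) <| .head (.read_head (q' := q5) ?_ ?_) <|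
    .head (.read_head (q' := q6) ?_ ?_) <| .single (.restart _ [c] _ q0 {q0} ?_ rfl rfl)
  all_goals simp [Aex3, τEx3, δEx3]

lemma not_acceptsFrom_q1_c_abcPow_one (x : List Γ3) :
    ¬ Aex3.AcceptsFrom (.conf x q1 (c :: abcPow 1)) := by
  have hrun : ReflTransGen Aex3.Step (.conf x q1 (c :: abcPow 1)) (.conf (x ++ [b]) q4 []) := by
    refine .head (.read_head (q' := q2) ?_ ?_) <| .head (.read_head (q' := q3) ?_ ?_) <|
      .single (.read _ _ q4 [b] [] c ?_ ?_ ?_)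
    all_goals simp [Aex3, τEx3, δEx3]
  rw [acceptsFrom_iff_of_reflTransGen step_rightUnique hrun]
  exact not_acceptsFrom_of_not_step (not_step_nil_of_δend_eq_empty rfl)

lemma run_q1_c (x : List Γ3) :
    ReflTransGen Aex3.Step (.conf x q1 [c]) (.conf [] q7 x) := by
  refine .head (.read_head (q' := q2) ?_ ?_) (.single (.restart_end (S := {q7}) rfl rfl))
  all_goals simp [Aex3, τEx3, δEx3]

lemma not_acceptsFrom_abcPow_zero : ¬ Aex3.AcceptsFrom (.conf [] q0 (abcPow 0)) :=
  not_acceptsFrom_of_not_step (not_step_nil_of_δend_eq_empty rfl)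

lemma acceptsFrom_abcPow_one : Aex3.AcceptsFrom (.conf [] q0 (abcPow 1)) := by
  refine (run_sweep 0 []).trans <| (run_q1_c _).trans <|
    .head (.read_head (q' := q8) ?_ ?_) (.single (.accept [] [] q8 (by simp) rfl))
  all_goals simp [Aex3, τEx3, δEx3]

lemma not_acceptsFrom_abcPow_three_mul_add_two (k : ℕ) :
    ¬ Aex3.AcceptsFrom (.conf [] q0 (abcPow (3 * k + 2))) := by
  rw [show 3 * k + 2 = 1 + 3 * k + 1 by ring, abcPow_add,
    acceptsFrom_iff_of_reflTransGen step_rightUnique (run_sweep k _)]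
  exact not_acceptsFrom_q1_c_abcPow_one _

lemma acceptsFrom_abcPow_three_mul_add_three (k : ℕ) :
    Aex3.AcceptsFrom (.conf [] q0 (abcPow (3 * k + 3))) ↔
      Aex3.AcceptsFrom (.conf [] q0 (abcPow (k + 1))) := by
  have hrun := (run_sweep k (abcPow 2)).trans (run_restart _)
  rw [← abcPow_add, show 1 + 3 * k + 2 = 3 * k + 3 by ring,
    show abcPow k ++ [a] ++ [b] ++ [c] = abcPow (k + 1) by simp [abcPow_add, abcPow]] at hrun
  exact acceptsFrom_iff_of_reflTransGen step_rightUnique hrun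

lemma not_acceptsFrom_abcPow_three_mul_add_four (k : ℕ) :
    ¬ Aex3.AcceptsFrom (.conf [] q0 (abcPow (3 * k + 4))) := by
  have hrun := (run_sweep (k + 1) []).trans (run_q1_c _)
  rw [List.append_nil, show 1 + 3 * (k + 1) = 3 * k + 4 by ring] at hrun
  rw [acceptsFrom_iff_of_reflTransGen step_rightUnique
    (hrun.tail (.read_head (q' := q8) (by simp [Aex3, τEx3]) (by simp [Aex3, δEx3])))]
  exact not_acceptsFrom_of_not_step
    (not_step_cons_of_δ_eq_empty (by simp [Aex3, τEx3]) (by simp [Aex3, δEx3]))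

theorem acceptsFrom_abcPow_iff (m : ℕ) :
    Aex3.AcceptsFrom (.conf [] q0 (abcPow m)) ↔ ∃ n, m = 3 ^ n := by
  induction m using Nat.strong_induction_on with
  | _ m ih =>
  obtain rfl | rfl | ⟨k, rfl | rfl | rfl⟩ :
      m = 0 ∨ m = 1 ∨ ∃ k, m = 3 * k + 2 ∨ m = 3 * k + 3 ∨ m = 3 * k + 4 := by
    rcases Nat.lt_or_ge m 2 with hm | hm
    · omega
    · exact Or.inr (Or.inr ⟨(m - 2) / 3, by omega⟩)
  · exact iff_of_false not_acceptsFrom_abcPow_zero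
      fun ⟨n, h⟩ => pow_ne_zero n three_ne_zero h.symm
  · exact iff_of_true acceptsFrom_abcPow_one ⟨0, rfl⟩
  · exact iff_of_false (not_acceptsFrom_abcPow_three_mul_add_two k)
      (Nat.not_exists_eq_pow_of_not_dvd (by omega) (by omega))
  · rw [acceptsFrom_abcPow_three_mul_add_three, ih (k + 1) (by omega),
      show 3 * k + 3 = 3 * (k + 1) by ring, Nat.exists_mul_eq_pow_iff three_pos]
  · exact iff_of_false (not_acceptsFrom_abcPow_three_mul_add_four k)
      (Nat.not_exists_eq_pow_of_not_dvd (by omega) (by omega))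

end Aex3

/-- `L(A_ex3) ∩ (abc)* = {(abc)^(3ⁿ) : n ≥ 0}`. -/
theorem Aex3_inter_abc_star :
    Aex3.lang ∩ { w | ∃ m : ℕ, w = (List.replicate m [Γ3.a, Γ3.b, Γ3.c]).flatten } =
    { w | ∃ n : ℕ, w = (List.replicate (3 ^ n) [Γ3.a, Γ3.b, Γ3.c]).flatten } := by
  ext w
  simp only [Set.mem_inter_iff, Set.mem_ofPred_eq, Aex3.mem_lang_iff]
  constructor
  · rintro ⟨hacc, m, rfl⟩
    obtain ⟨n, rfl⟩ := (Aex3.acceptsFrom_abcPow_iff m).1 hacc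
    exact ⟨n, rfl⟩
  · rintro ⟨n, rfl⟩
    exact ⟨(Aex3.acceptsFrom_abcPow_iff _).2 ⟨n, rfl⟩, _, rfl⟩
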